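/- Let q be a power of a prime p, let L be a field of characteristic p containing 𝔽_q with a nonarchimedean absolute value |·|, and let B be a commutative unital L-algebra with a nonarchimedean ring norm ‖·‖ satisfying ‖λ·x‖ = |λ|·‖x‖ for λ ∈ L and x ∈ B. Let θ ∈ L with |θ| > 1, let d ≥ 1, let N ∈ M_d(B) be nilpotent, and let s ≥ 0 and G₁, …, G_s ∈ M_d(B). Let (e_j)_{j≥0} be the unique sequence of matrices in M_d(B) with e₀ = Id satisfying e_j·(θ^{q^j}·Id + N^{[q^j]}) = (θ·Id + N)·e_j + ∑_{k=1}^{min(j,s)} G_k·(e_{j−k})^{[q^k]} for all j ≥ 1. Then for every real ρ > 0 one has ‖e_j‖·ρ^{q^j} → 0 as j → ∞ (equivalently, q^{−j}·log ‖e_j‖ → −∞). -/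

import Mathlib

/-!
Put `μ_j = θ^{q^j} - θ` and `N_j = N^{[q^j]}`; the recursion reads
`μ_j e_j = N e_j - e_j N_j + S_j` with `S_j = ∑ G_k e_{j-k}^{[q^k]}`, and `|μ_j| = |θ|^{q^j}`.
As `N` and `N_j` are nilpotent, a downward induction on `(a, i)` in the ultrametric estimate
`|μ_j| ‖N^a e_j N_j^i‖ ≤ max (‖N^{a+1} e_j N_j^i‖, ‖N^a e_j N_j^{i+1}‖, ‖N^a S_j N_j^i‖)`
bounds `e_j N_j^i` by `S_j N_j^i / μ_j^{i+1}`, and `S_j N_j^i = ∑ G_k (e_{j-k} N_{j-k}^i)^{[q^k]}`.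
So bounds `‖e_{j-k} N_{j-k}^i‖ ≤ (c |θ|^{-i})^{q^{j-k}}` for the `s` previous indices give the same
bound for `j` with `c` replaced by `c δ`, for a fixed `δ < 1`, as soon as `q^j` is large enough to
absorb the constants. Iterating, `‖e_j‖ ≤ (C δ^t)^{q^j}` for `j ≥ J + t s`, which beats `ρ^{q^j}`.
-/

/-- The supremum norm of a matrix: the maximum of the norms of its entries. -/
noncomputable def matNorm {ι κ : Type*} [Fintype ι] [Fintype κ] {B : Type*} [Norm B]
    (M : Matrix ι κ B) : ℝ :=
  ⨆ i, ⨆ j, ‖M i j‖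

open Finset Filter Topology

section MatNorm

variable {ι κ ν : Type*} [Fintype ι] [Fintype κ] [Fintype ν] {B : Type*} [NormedCommRing B]

lemma matNorm_nonneg (M : Matrix ι κ B) : 0 ≤ matNorm M :=
  Real.iSup_nonneg fun _ => Real.iSup_nonneg fun _ => norm_nonneg _

lemma matNorm_le {M : Matrix ι κ B} {c : ℝ} (hc : 0 ≤ c) (h : ∀ i j, ‖M i j‖ ≤ c) :
    matNorm M ≤ c :=
  Real.iSup_le (fun i => Real.iSup_le (h i) hc) hc

lemma norm_le_matNorm (M : Matrix ι κ B) (i : ι) (j : κ) : ‖M i j‖ ≤ matNorm M :=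
  (le_ciSup (f := fun j => ‖M i j‖) (Set.finite_range _).bddAbove j).trans
    (le_ciSup (f := fun i => ⨆ j, ‖M i j‖) (Set.finite_range _).bddAbove i)

@[simp]
lemma matNorm_zero : matNorm (0 : Matrix ι κ B) = 0 :=
  (matNorm_le le_rfl fun _ _ => by simp).antisymm (matNorm_nonneg 0)

lemma matNorm_smul {L : Type*} [NormedField L] [Module L B]
    (hnorm : ∀ (l : L) (x : B), ‖l • x‖ = ‖l‖ * ‖x‖) (l : L) (M : Matrix ι κ B) :
    matNorm (l • M) = ‖l‖ * matNorm M := by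
  simp only [matNorm, Matrix.smul_apply, hnorm, Real.mul_iSup_of_nonneg (norm_nonneg l)]

lemma matNorm_map_pow_le (M : Matrix ι κ B) {t : ℕ} (ht : 0 < t) :
    matNorm (M.map (· ^ t)) ≤ matNorm M ^ t :=
  matNorm_le (pow_nonneg (matNorm_nonneg M) t) fun i j =>
    (norm_pow_le' _ ht).trans (pow_le_pow_left₀ (norm_nonneg _) (norm_le_matNorm M i j) t)

variable [IsUltrametricDist B]

lemma matNorm_add_le (M P : Matrix ι κ B) :
    matNorm (M + P) ≤ max (matNorm M) (matNorm P) :=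
  matNorm_le (le_max_of_le_left (matNorm_nonneg M)) fun i j =>
    (IsUltrametricDist.norm_add_le_max _ _).trans
      (max_le_max (norm_le_matNorm M i j) (norm_le_matNorm P i j))

lemma matNorm_sub_le (M P : Matrix ι κ B) :
    matNorm (M - P) ≤ max (matNorm M) (matNorm P) :=
  matNorm_le (le_max_of_le_left (matNorm_nonneg M)) fun i j => by
    rw [Matrix.sub_apply, sub_eq_add_neg]
    refine (IsUltrametricDist.norm_add_le_max _ _).trans ?_
    rw [norm_neg]
    exact max_le_max (norm_le_matNorm M i j) (norm_le_matNorm P i j)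

lemma matNorm_sum_le {α : Type*} {t : Finset α} {f : α → Matrix ι κ B} {c : ℝ}
    (hc : 0 ≤ c) (h : ∀ k ∈ t, matNorm (f k) ≤ c) : matNorm (∑ k ∈ t, f k) ≤ c :=
  matNorm_le hc fun i j => by
    rw [Matrix.sum_apply]
    exact IsUltrametricDist.norm_sum_le_of_forall_le_of_nonneg hc
      fun k hk => (norm_le_matNorm (f k) i j).trans (h k hk)

lemma matNorm_mul_le (M : Matrix ι κ B) (P : Matrix κ ν B) :
    matNorm (M * P) ≤ matNorm M * matNorm P :=
  matNorm_le (mul_nonneg (matNorm_nonneg M) (matNorm_nonneg P)) fun i j => by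
    rw [Matrix.mul_apply]
    exact IsUltrametricDist.norm_sum_le_of_forall_le_of_nonneg
      (mul_nonneg (matNorm_nonneg M) (matNorm_nonneg P)) fun k _ =>
        (norm_mul_le _ _).trans (mul_le_mul (norm_le_matNorm M i k) (norm_le_matNorm P k j)
          (norm_nonneg _) (matNorm_nonneg M))

end MatNorm

lemma le_mul_inv_pow_of_mul_le_max {f : ℕ → ℕ → ℝ} {m : ℕ} {Λ E : ℝ} (hΛ : 1 ≤ Λ)
    (hE : 0 ≤ E)
    (hzero : ∀ a i, m ≤ a ∨ m ≤ i → f a i = 0)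
    (hf : ∀ a i, Λ * f a i ≤ max (max (f (a + 1) i) (f a (i + 1))) (E * Λ⁻¹ ^ i)) (a i : ℕ) :
    f a i ≤ E * Λ⁻¹ ^ (i + 1) := by
  have hΛ0 : 0 < Λ := zero_lt_one.trans_le hΛ
  have hbound : ∀ i, 0 ≤ E * Λ⁻¹ ^ i := fun i => mul_nonneg hE (by positivity)
  have hanti : ∀ i, E * Λ⁻¹ ^ (i + 1) ≤ E * Λ⁻¹ ^ i := fun i =>
    mul_le_mul_of_nonneg_left
      (pow_le_pow_of_le_one (by positivity) (inv_le_one_of_one_le₀ hΛ) (by omega)) hE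
  -- downward induction on `a + i`, starting from `2 * m` where `f` vanishes
  suffices h : ∀ c a i, 2 * m ≤ a + i + c → f a i ≤ E * Λ⁻¹ ^ (i + 1) from
    h (2 * m) a i (by omega)
  intro c
  induction c with
  | zero => intro a i h; rw [hzero a i (by omega)]; exact hbound _
  | succ c ih =>
    intro a i hai
    by_cases hm : m ≤ a ∨ m ≤ i
    · rw [hzero a i hm]; exact hbound _
    have hmax : Λ * f a i ≤ E * Λ⁻¹ ^ i :=
      (hf a i).trans <| max_le (max_le ((ih _ _ (by omega)).trans (hanti i))
        ((ih _ _ (by omega)).trans ((hanti _).trans (hanti i)))) le_rfl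
    calc f a i = Λ⁻¹ * (Λ * f a i) := by field_simp
      _ ≤ Λ⁻¹ * (E * Λ⁻¹ ^ i) := by gcongr
      _ = E * Λ⁻¹ ^ (i + 1) := by ring

section Sylvester

variable {ι : Type*} [Fintype ι] [DecidableEq ι] {B : Type*} [NormedCommRing B]
  [IsUltrametricDist B] {L : Type*} [NormedField L] [Algebra L B]

lemma matNorm_mul_pow_le_of_smul_eq (hnorm : ∀ (l : L) (x : B), ‖l • x‖ = ‖l‖ * ‖x‖)
    {μ : L} {N N' X Y : Matrix ι ι B} {m : ℕ} {E : ℝ} (hμ : 1 ≤ ‖μ‖) (hE : 0 ≤ E)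
    (hN : N ^ m = 0) (hN' : N' ^ m = 0) (hX : μ • X = N * X - X * N' + Y)
    (hY : ∀ a i, matNorm (N ^ a * Y * N' ^ i) ≤ E * ‖μ‖⁻¹ ^ i) (i : ℕ) :
    matNorm (X * N' ^ i) ≤ E * ‖μ‖⁻¹ ^ (i + 1) := by
  have hshift : ∀ a i, μ • (N ^ a * X * N' ^ i) =
      N ^ (a + 1) * X * N' ^ i - N ^ a * X * N' ^ (i + 1) + N ^ a * Y * N' ^ i := by
    intro a i
    rw [← Matrix.smul_mul, ← Matrix.mul_smul, hX, pow_succ, pow_succ']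
    noncomm_ring
  have hvanish : ∀ a i, m ≤ a ∨ m ≤ i → matNorm (N ^ a * X * N' ^ i) = 0 := by
    rintro a i (h | h) <;> simp [pow_eq_zero_of_le h hN, pow_eq_zero_of_le h hN']
  have hstep : ∀ a i, ‖μ‖ * matNorm (N ^ a * X * N' ^ i) ≤
      max (max (matNorm (N ^ (a + 1) * X * N' ^ i)) (matNorm (N ^ a * X * N' ^ (i + 1))))
        (E * ‖μ‖⁻¹ ^ i) := by
    intro a i
    rw [← matNorm_smul hnorm, hshift]
    exact (matNorm_add_le _ _).trans (max_le_max (matNorm_sub_le _ _) (hY a i))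
  simpa only [pow_zero, one_mul] using le_mul_inv_pow_of_mul_le_max hμ hE hvanish hstep 0 i

end Sylvester

lemma Matrix.map_pow_map_pow {ι κ M : Type*} [Monoid M] (A : Matrix ι κ M) (a b : ℕ) :
    (A.map (· ^ a)).map (· ^ b) = A.map (· ^ (a * b)) := by
  rw [Matrix.map_map]
  congr 1
  funext x
  simp [pow_mul]

section Frobenius

variable {ι κ ν : Type*} [Fintype κ] {B : Type*} [CommRing B] {p n q : ℕ} [ExpChar B p]

lemma coe_iterateFrobenius_eq_pow (hq : q = p ^ n) (k : ℕ) :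
    ⇑(iterateFrobenius B p (n * k)) = (· ^ q ^ k) := by
  funext x
  rw [iterateFrobenius_def, hq, pow_mul]

lemma Matrix.map_pow_charPow_mul (hq : q = p ^ n) (k : ℕ) (M : Matrix ι κ B)
    (P : Matrix κ ν B) : (M * P).map (· ^ q ^ k) = M.map (· ^ q ^ k) * P.map (· ^ q ^ k) := by
  rw [← coe_iterateFrobenius_eq_pow hq]
  exact Matrix.map_mul

lemma Matrix.map_pow_charPow_pow [Fintype ι] [DecidableEq ι] (hq : q = p ^ n) (k : ℕ)
    (M : Matrix ι ι B) (i : ℕ) : (M ^ i).map (· ^ q ^ k) = M.map (· ^ q ^ k) ^ i := by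
  rw [← coe_iterateFrobenius_eq_pow hq]
  exact Matrix.map_pow _ _ _

lemma Matrix.map_pow_charPow_pow_eq_zero [Fintype ι] [DecidableEq ι] (hq : q = p ^ n)
    {N : Matrix ι ι B} {m : ℕ} (hm : N ^ m = 0) (k : ℕ) : N.map (· ^ q ^ k) ^ m = 0 := by
  rw [← Matrix.map_pow_charPow_pow hq, hm, ← coe_iterateFrobenius_eq_pow hq]
  exact Matrix.map_zero _ (map_zero _)

end Frobenius

lemma Matrix.sub_smul_eq_of_mul_smul_one_add_eq {ι B L : Type*} [Fintype ι] [DecidableEq ι]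
    [CommRing B] [Field L] [Algebra L B] {a b : L} {X N N' S : Matrix ι ι B}
    (h : X * (algebraMap L B a • 1 + N') = (algebraMap L B b • 1 + N) * X + S) :
    (a - b) • X = N * X - X * N' + S := by
  rw [mul_add, add_mul, Matrix.mul_smul, Matrix.smul_mul, mul_one, one_mul, algebraMap_smul,
    algebraMap_smul] at h
  rw [sub_smul, sub_eq_iff_eq_add, ← add_left_inj (X * N'), h]
  abel

lemma norm_pow_sub_self_of_one_lt {L : Type*} [NormedField L] [IsUltrametricDist L] {θ : L}
    (hθ : 1 < ‖θ‖) {t : ℕ} (ht : 1 < t) : ‖θ ^ t - θ‖ = ‖θ‖ ^ t := by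
  have hlt : ‖θ‖ < ‖θ ^ t‖ := by rw [norm_pow]; exact lt_self_pow₀ hθ ht
  rw [sub_eq_add_neg, IsUltrametricDist.norm_add_eq_max_of_norm_ne_norm
    (by rw [norm_neg]; exact hlt.ne'), norm_neg, max_eq_left hlt.le, norm_pow]

lemma iterate_contraction {P : ℝ → ℕ → Prop} {C δ : ℝ} {J s : ℕ} (hC : 0 ≤ C) (hδ : 0 ≤ δ)
    (hδ1 : δ ≤ 1) (hmono : ∀ c c' j, 0 ≤ c → c ≤ c' → P c j → P c' j)
    (hbase : ∀ j < J + s, P C j)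
    (hstep : ∀ c, 0 ≤ c → ∀ j, J ≤ j → (∀ k ∈ Icc 1 (min j s), P c (j - k)) → P (c * δ) j)
    (t j : ℕ) (hj : J + t * s ≤ j) : P (C * δ ^ t) j := by
  induction t generalizing j with
  | zero =>
    rw [pow_zero, mul_one]
    clear hj
    induction j using Nat.strong_induction_on with
    | _ j ih =>
      rcases lt_or_ge j (J + s) with hjs | hjs
      · exact hbase j hjs
      refine hmono _ _ _ (mul_nonneg hC hδ) (mul_le_of_le_one_right hC hδ1)
        (hstep C hC j (by omega) fun k hk => ih _ ?_)
      obtain ⟨hk1, hkj⟩ := mem_Icc.1 hk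
      have := min_le_left j s
      omega
  | succ t ih =>
    rw [pow_succ, ← mul_assoc]
    refine hstep _ (mul_nonneg hC (pow_nonneg hδ t)) j (by nlinarith) fun k hk => ih _ ?_
    have := (mem_Icc.1 hk).2
    have := min_le_right j s
    rw [Nat.succ_mul] at hj
    omega

lemma tendsto_mul_pow_pow_of_eventually_le {a : ℕ → ℝ} {q : ℕ} (hq : 1 < q)
    (ha : ∀ j, 0 ≤ a j) (h : ∀ r > 0, ∀ᶠ j in atTop, a j ≤ r ^ q ^ j) {ρ : ℝ} (hρ : 0 < ρ) :
    Tendsto (fun j => a j * ρ ^ q ^ j) atTop (𝓝 0) := by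
  have hlim : Tendsto (fun j => (2⁻¹ : ℝ) ^ q ^ j) atTop (𝓝 0) :=
    (tendsto_pow_atTop_nhds_zero_of_lt_one (by norm_num) (by norm_num)).comp
      (tendsto_pow_atTop_atTop_of_one_lt hq)
  refine squeeze_zero' (Eventually.of_forall fun j => mul_nonneg (ha j) (by positivity)) ?_ hlim
  filter_upwards [h (2 * ρ)⁻¹ (by positivity)] with j hj
  calc a j * ρ ^ q ^ j ≤ (2 * ρ)⁻¹ ^ q ^ j * ρ ^ q ^ j := by gcongr
    _ = 2⁻¹ ^ q ^ j := by rw [← mul_pow]; congr 1; field_simp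

section TwistedPowBound

variable {ι : Type*} [Fintype ι] [DecidableEq ι] {B : Type*} [NormedCommRing B]

/-- `‖e j‖` alone obeys no closed recursion, since `‖N^{[q^j]}‖` may grow like `‖N‖^{q^j}`;
so `e j` is controlled together with all its products with powers of `N^{[q^j]}`. -/
def TwistedPowBound (e : ℕ → Matrix ι ι B) (N : Matrix ι ι B) (q : ℕ) (Λ c : ℝ) (j : ℕ) :
    Prop :=
  ∀ i, matNorm (e j * N.map (· ^ q ^ j) ^ i) ≤ (c * Λ⁻¹ ^ i) ^ q ^ j

variable {e : ℕ → Matrix ι ι B} {N : Matrix ι ι B} {q : ℕ} {Λ c : ℝ} {j : ℕ}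

lemma TwistedPowBound.mono {c' : ℝ} (hΛ : 0 ≤ Λ) (hc : 0 ≤ c) (hcc' : c ≤ c')
    (h : TwistedPowBound e N q Λ c j) : TwistedPowBound e N q Λ c' j := fun i =>
  (h i).trans (pow_le_pow_left₀ (mul_nonneg hc (pow_nonneg (inv_nonneg.2 hΛ) i))
    (mul_le_mul_of_nonneg_right hcc' (pow_nonneg (inv_nonneg.2 hΛ) i)) _)

variable {p n : ℕ} [ExpChar B p]

lemma exists_twistedPowBound_of_lt (hq : q = p ^ n) (hq0 : 0 < q) {m : ℕ} (hm : N ^ m = 0)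
    (hΛ : 1 ≤ Λ) (e : ℕ → Matrix ι ι B) (J : ℕ) :
    ∃ C, 0 ≤ C ∧ ∀ j < J, TwistedPowBound e N q Λ C j := by
  obtain ⟨X, hX⟩ := ((range J ×ˢ range m).image fun x =>
    matNorm (e x.1 * N.map (· ^ q ^ x.1) ^ x.2)).exists_le
  have hΛ0 : 0 < Λ := zero_lt_one.trans_le hΛ
  refine ⟨max X 1 * Λ ^ m, by positivity, fun j hj i => ?_⟩
  rcases lt_or_ge i m with hi | hi
  · have hone : 1 ≤ Λ ^ m * Λ⁻¹ ^ i := by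
      rw [inv_pow, ← div_eq_mul_inv, one_le_div (by positivity)]
      exact pow_le_pow_right₀ hΛ hi.le
    have hbig : 1 ≤ max X 1 * Λ ^ m * Λ⁻¹ ^ i := by
      rw [mul_assoc]; exact one_le_mul_of_one_le_of_one_le (le_max_right _ _) hone
    calc matNorm (e j * N.map (· ^ q ^ j) ^ i) ≤ X :=
          hX _ (mem_image.2 ⟨(j, i), mem_product.2 ⟨mem_range.2 hj, mem_range.2 hi⟩, rfl⟩)
      _ ≤ max X 1 * Λ ^ m * Λ⁻¹ ^ i := by
          rw [mul_assoc]
          exact (le_max_left _ _).trans (le_mul_of_one_le_right (by positivity) hone)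
      _ ≤ _ := le_self_pow₀ hbig (by positivity)
  · rw [pow_eq_zero_of_le hi (Matrix.map_pow_charPow_pow_eq_zero hq hm j), mul_zero,
      matNorm_zero]
    positivity

variable [IsUltrametricDist B]

lemma matNorm_sum_mul_pow_le (hq : q = p ^ n) (hq0 : 0 < q) {G : ℕ → Matrix ι ι B} {s : ℕ}
    {D : ℝ} (hΛ : 0 ≤ Λ) (hc : 0 ≤ c) (hD0 : 0 ≤ D) (hD : ∀ k ∈ Icc 1 s, matNorm (G k) ≤ D)
    (hprev : ∀ k ∈ Icc 1 (min j s), TwistedPowBound e N q Λ c (j - k)) (i : ℕ) :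
    matNorm ((∑ k ∈ Icc 1 (min j s), G k * (e (j - k)).map (· ^ q ^ k)) *
      N.map (· ^ q ^ j) ^ i) ≤ D * (c * Λ⁻¹ ^ i) ^ q ^ j := by
  rw [sum_mul]
  refine matNorm_sum_le (by positivity) fun k hk => ?_
  obtain ⟨hk1, hkjs⟩ := mem_Icc.1 hk
  have hkj : k ≤ j := hkjs.trans (min_le_left _ _)
  have hpow : q ^ (j - k) * q ^ k = q ^ j := by rw [← pow_add, Nat.sub_add_cancel hkj]
  have htwist : G k * (e (j - k)).map (· ^ q ^ k) * N.map (· ^ q ^ j) ^ i =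
      G k * (e (j - k) * N.map (· ^ q ^ (j - k)) ^ i).map (· ^ q ^ k) := by
    rw [mul_assoc, Matrix.map_pow_charPow_mul hq, ← Matrix.map_pow_charPow_pow hq,
      ← Matrix.map_pow_charPow_pow hq, Matrix.map_pow_map_pow, hpow]
  rw [htwist]
  calc _ ≤ matNorm (G k) *
        matNorm ((e (j - k) * N.map (· ^ q ^ (j - k)) ^ i).map (· ^ q ^ k)) := matNorm_mul_le _ _
    _ ≤ D * matNorm (e (j - k) * N.map (· ^ q ^ (j - k)) ^ i) ^ q ^ k :=
        mul_le_mul (hD k (mem_Icc.2 ⟨hk1, hkjs.trans (min_le_right _ _)⟩))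
          (matNorm_map_pow_le _ (by positivity)) (matNorm_nonneg _) hD0
    _ ≤ D * ((c * Λ⁻¹ ^ i) ^ q ^ (j - k)) ^ q ^ k := by
        gcongr
        · exact matNorm_nonneg _
        · exact hprev k hk i
    _ = D * (c * Λ⁻¹ ^ i) ^ q ^ j := by rw [← pow_mul, hpow]

end TwistedPowBound

section Contraction

variable {ι : Type*} [Fintype ι] [DecidableEq ι] {B : Type*} [NormedCommRing B]
  [IsUltrametricDist B] {L : Type*} [NormedField L] [IsUltrametricDist L] [Algebra L B]
  {p n q : ℕ} [ExpChar B p] {θ : L} {N : Matrix ι ι B} {m s : ℕ} {G e : ℕ → Matrix ι ι B}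

lemma twistedPowBound_of_smul_eq (hq : q = p ^ n) (hq1 : 1 < q)
    (hnorm : ∀ (l : L) (x : B), ‖l • x‖ = ‖l‖ * ‖x‖) (hθ : 1 < ‖θ‖) (hm : N ^ m = 0) {j : ℕ}
    {K D σ c : ℝ} (hj : 1 ≤ j) (hK : ∀ a, matNorm (N ^ a) ≤ K) (hD0 : 0 ≤ D)
    (hD : ∀ k ∈ Icc 1 s, matNorm (G k) ≤ D) (hKD : K * D ≤ σ ^ q ^ j) (hc : 0 ≤ c)
    (hsyl : (θ ^ q ^ j - θ) • e j = N * e j - e j * N.map (· ^ q ^ j) +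
      ∑ k ∈ Icc 1 (min j s), G k * (e (j - k)).map (· ^ q ^ k))
    (hprev : ∀ k ∈ Icc 1 (min j s), TwistedPowBound e N q ‖θ‖ c (j - k)) :
    TwistedPowBound e N q ‖θ‖ (c * (σ / ‖θ‖)) j := by
  set Λ := ‖θ‖
  have hΛ0 : 0 < Λ := zero_lt_one.trans hθ
  have hμ : ‖θ ^ q ^ j - θ‖ = Λ ^ q ^ j :=
    norm_pow_sub_self_of_one_lt hθ (Nat.one_lt_pow (by omega) hq1)
  have hK0 : 0 ≤ K := (matNorm_nonneg _).trans (hK 0)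
  have hE : 0 ≤ K * D * c ^ q ^ j := by positivity
  set S := ∑ k ∈ Icc 1 (min j s), G k * (e (j - k)).map (· ^ q ^ k)
  have hY : ∀ a i, matNorm (N ^ a * S * N.map (· ^ q ^ j) ^ i) ≤
      K * D * c ^ q ^ j * ‖θ ^ q ^ j - θ‖⁻¹ ^ i := fun a i =>
    calc _ ≤ matNorm (N ^ a) * matNorm (S * N.map (· ^ q ^ j) ^ i) := by
          rw [mul_assoc]; exact matNorm_mul_le _ _
      _ ≤ K * (D * (c * Λ⁻¹ ^ i) ^ q ^ j) :=
          mul_le_mul (hK a) (matNorm_sum_mul_pow_le hq (by omega) hΛ0.le hc hD0 hD hprev i)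
            (matNorm_nonneg _) hK0
      _ = K * D * c ^ q ^ j * ‖θ ^ q ^ j - θ‖⁻¹ ^ i := by
          rw [hμ, mul_pow, ← pow_mul, inv_pow, inv_pow, ← pow_mul, mul_comm i]; ring
  intro i
  calc matNorm (e j * N.map (· ^ q ^ j) ^ i)
      ≤ K * D * c ^ q ^ j * ‖θ ^ q ^ j - θ‖⁻¹ ^ (i + 1) :=
        matNorm_mul_pow_le_of_smul_eq hnorm (by rw [hμ]; exact one_le_pow₀ hθ.le) hE hm
          (Matrix.map_pow_charPow_pow_eq_zero hq hm j) hsyl hY i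
    _ ≤ σ ^ q ^ j * c ^ q ^ j * ‖θ ^ q ^ j - θ‖⁻¹ ^ (i + 1) := by gcongr
    _ = (c * (σ / Λ) * Λ⁻¹ ^ i) ^ q ^ j := by
        rw [hμ, ← inv_pow, ← pow_mul, mul_comm (q ^ j), pow_mul, ← mul_pow, ← mul_pow,
          pow_succ, div_eq_mul_inv]
        ring

lemma exists_twistedPowBound_contraction (hq : q = p ^ n) (hq1 : 1 < q)
    (hnorm : ∀ (l : L) (x : B), ‖l • x‖ = ‖l‖ * ‖x‖) (hθ : 1 < ‖θ‖) (hm : N ^ m = 0)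
    (hsyl : ∀ j, 1 ≤ j → (θ ^ q ^ j - θ) • e j = N * e j - e j * N.map (· ^ q ^ j) +
      ∑ k ∈ Icc 1 (min j s), G k * (e (j - k)).map (· ^ q ^ k)) :
    ∃ J δ, 0 ≤ δ ∧ δ < 1 ∧ ∀ c, 0 ≤ c → ∀ j, J ≤ j →
      (∀ k ∈ Icc 1 (min j s), TwistedPowBound e N q ‖θ‖ c (j - k)) →
        TwistedPowBound e N q ‖θ‖ (c * δ) j := by
  set K := ∑ a ∈ range m, matNorm (N ^ a)
  set D := ∑ k ∈ Icc 1 s, matNorm (G k)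
  have hK : ∀ a, matNorm (N ^ a) ≤ K := by
    intro a
    rcases lt_or_ge a m with ha | ha
    · exact single_le_sum (fun _ _ => matNorm_nonneg _) (mem_range.2 ha)
    · rw [pow_eq_zero_of_le ha hm, matNorm_zero]
      exact sum_nonneg fun _ _ => matNorm_nonneg _
  have hD : ∀ k ∈ Icc 1 s, matNorm (G k) ≤ D := fun k hk =>
    single_le_sum (fun _ _ => matNorm_nonneg _) hk
  obtain ⟨σ, hσ1, hσθ⟩ := exists_between hθ
  obtain ⟨J, hJ⟩ := eventually_atTop.1 <|
    (((tendsto_pow_atTop_atTop_of_one_lt hσ1).comp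
      (tendsto_pow_atTop_atTop_of_one_lt hq1)).eventually_ge_atTop (K * D)).and
      (eventually_ge_atTop 1)
  refine ⟨J, σ / ‖θ‖, by positivity, (div_lt_one (by positivity)).2 hσθ,
    fun c hc j hj hprev => ?_⟩
  exact twistedPowBound_of_smul_eq hq hq1 hnorm hθ hm (hJ j hj).2 hK
    (sum_nonneg fun _ _ => matNorm_nonneg _) hD (hJ j hj).1 hc (hsyl j (hJ j hj).2) hprev

end Contraction

theorem statement10_general
    (p n q : ℕ) [Fact p.Prime] (hn : n ≠ 0) (hq : q = p ^ n)
    (L : Type) [NormedField L] [IsUltrametricDist L] [CharP L p]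
    (B : Type) [NormedCommRing B] [NormOneClass B] [IsUltrametricDist B] [Algebra L B]
    (hnorm : ∀ (l : L) (x : B), ‖l • x‖ = ‖l‖ * ‖x‖)
    (θ : L) (hθ : 1 < ‖θ‖)
    (d : ℕ)
    (N : Matrix (Fin d) (Fin d) B) (hN : IsNilpotent N)
    (s : ℕ) (G : ℕ → Matrix (Fin d) (Fin d) B)
    (e : ℕ → Matrix (Fin d) (Fin d) B)
    (hrec : ∀ j : ℕ, 1 ≤ j →
      e j * ((algebraMap L B (θ ^ q ^ j)) • (1 : Matrix (Fin d) (Fin d) B) + N.map (· ^ q ^ j))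
        = ((algebraMap L B θ) • (1 : Matrix (Fin d) (Fin d) B) + N) * e j +
            ∑ k ∈ Finset.Icc 1 (min j s), G k * (e (j - k)).map (· ^ q ^ k)) :
    ∀ ρ : ℝ, 0 < ρ →
      Filter.Tendsto (fun j => matNorm (e j) * ρ ^ q ^ j) Filter.atTop (nhds 0) := by
  have : Nontrivial B := NormOneClass.nontrivial
  have : CharP B p := charP_of_injective_algebraMap (algebraMap L B).injective p
  have : ExpChar B p := .prime Fact.out
  have hq1 : 1 < q := hq ▸ Nat.one_lt_pow hn (Fact.out : p.Prime).one_lt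
  obtain ⟨m, hm⟩ := hN
  obtain ⟨J, δ, hδ0, hδ1, hstep⟩ := exists_twistedPowBound_contraction hq hq1 hnorm hθ hm
    fun j hj => Matrix.sub_smul_eq_of_mul_smul_one_add_eq (hrec j hj)
  obtain ⟨C, hC, hbase⟩ := exists_twistedPowBound_of_lt hq (by omega) hm hθ.le e (J + s)
  refine fun ρ => tendsto_mul_pow_pow_of_eventually_le hq1 (fun j => matNorm_nonneg _)
    fun r hr => ?_
  obtain ⟨t, ht⟩ := (((tendsto_pow_atTop_nhds_zero_of_lt_one hδ0 hδ1).const_mul C).eventually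
    (gt_mem_nhds (by simpa using hr))).exists
  filter_upwards [eventually_ge_atTop (J + t * s)] with j hj
  have hbound := iterate_contraction (P := TwistedPowBound e N q ‖θ‖) hC hδ0 hδ1.le
    (fun _ _ _ hc hcc' => TwistedPowBound.mono (zero_le_one.trans hθ.le) hc hcc') hbase hstep
    t j hj 0
  simp only [pow_zero, mul_one] at hbound
  exact hbound.trans (pow_le_pow_left₀ (by positivity) ht.le _)

/-- Let `q = pⁿ`, let `L ⊇ 𝔽_q` be a field of characteristic `p` with a
nonarchimedean absolute value, and let `B` be a commutative unital `L`-algebra with a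
nonarchimedean ring norm satisfying `‖λ•x‖ = |λ|‖x‖`.  Let `θ ∈ L` with `|θ| > 1`, let
`N ∈ M_d(B)` be nilpotent and `G₁, …, G_s ∈ M_d(B)`.  Let `(e_j)` be the (unique) sequence
with `e₀ = Id` satisfying, for every `j ≥ 1`,
`e_j (θ^{q^j} Id + N^{[q^j]}) = (θ Id + N) e_j + ∑_{k=1}^{min(j,s)} G_k (e_{j-k})^{[q^k]}`.
Then `‖e_j‖ ρ^{q^j} → 0` for every real `ρ > 0`. -/
theorem statement10
    (p n q : ℕ) [Fact p.Prime] (hn : n ≠ 0) (hq : q = p ^ n)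
    (L : Type) [NormedField L] [IsUltrametricDist L] [CharP L p]
    (φ : GaloisField p n →+* L)
    (B : Type) [NormedCommRing B] [NormOneClass B] [IsUltrametricDist B] [Algebra L B]
    (hnorm : ∀ (l : L) (x : B), ‖l • x‖ = ‖l‖ * ‖x‖)
    (θ : L) (hθ : 1 < ‖θ‖)
    (d : ℕ) (hd : 1 ≤ d)
    (N : Matrix (Fin d) (Fin d) B) (hN : IsNilpotent N)
    (s : ℕ) (G : ℕ → Matrix (Fin d) (Fin d) B)
    (e : ℕ → Matrix (Fin d) (Fin d) B) (he0 : e 0 = 1)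
    (hrec : ∀ j : ℕ, 1 ≤ j →
      e j * ((algebraMap L B (θ ^ q ^ j)) • (1 : Matrix (Fin d) (Fin d) B) + N.map (· ^ q ^ j))
        = ((algebraMap L B θ) • (1 : Matrix (Fin d) (Fin d) B) + N) * e j +
            ∑ k ∈ Finset.Icc 1 (min j s), G k * (e (j - k)).map (· ^ q ^ k)) :
    ∀ ρ : ℝ, 0 < ρ →
      Filter.Tendsto (fun j => matNorm (e j) * ρ ^ q ^ j) Filter.atTop (nhds 0) :=
  statement10_general p n q hn hq L B hnorm θ hθ d N hN s G e hrec
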